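/- arXiv:math/9706207 — 2 statements merged into one kernel-verified Lean document; each statement's English description precedes it below -/
import Mathlib

section
/- Let δ < κ be infinite cardinals such that κ is δ-Jónsson, let L be a countable first-order language, let M be an L-structure whose universe has cardinality κ, let e : κ → M be an injection into the universe of M, and let s be a finite subset of the universe of M. Then there is an elementary substructure X ≼ M whose universe contains s and such that the set Z = {α < κ : e(α) ∈ X} of ordinals below κ has order type exactly δ but δ is not a subset of Z (equivalently, Z ∩ δ has order type strictly less than δ). -/
open FirstOrder Cardinal Ordinal

/-- The order type of a subset of a well-ordered type, as an ordinal. -/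
noncomputable def setOrderType {α : Type*} [LinearOrder α] [WellFoundedLT α]
    (s : Set α) : Ordinal :=
  Ordinal.type (Subrel ((· < ·) : α → α → Prop) (· ∈ s))

/-- The ordinal rank of an element of a well-ordered type. -/
noncomputable def ordRank {α : Type*} [LinearOrder α] [WellFoundedLT α] (a : α) : Ordinal :=
  @Ordinal.typein α (· < ·) isWellOrder_lt a

/-- `κ` is `δ`-Jónsson: every first-order structure in a countable language whose universe
is (a canonical type of order type) `κ` has an elementary substructure whose underlying set
has order type exactly `δ`. -/
def IsDeltaJonsson (δ κ : Cardinal.{0}) : Prop :=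
  ∀ (L : FirstOrder.Language.{0, 0}) [L.Structure κ.ord.ToType], Countable L.Symbols →
    ∃ X : L.ElementarySubstructure κ.ord.ToType,
      setOrderType (X : Set κ.ord.ToType) = δ.ord

/-! Transport `M` to `κ` along a bijection `g` and expand it by Skolem functions, by constants
for `s` and for the `δ`-th element `β` of `κ`, and by the injection `e ∘ g⁻¹` together with a
left inverse. A `δ`-Jónsson substructure of the expansion pulls back to an elementary
substructure `X` of `M`; closure under the two unary maps makes `Z` equal to that Jónsson set,
so `Z` has order type `δ`. As `β ∈ Z`, `δ ⊆ Z` would make the segment below `β`, of type `δ`,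
a proper initial segment of `Z`. -/

theorem ordRank_lt_setOrderType {α : Type*} [LinearOrder α] [WellFoundedLT α] {s : Set α}
    {a : α} (ha : a ∈ s) (hlt : ∀ b < a, b ∈ s) : ordRank a < setOrderType s :=
  PrincipalSeg.ordinal_type_lt
    { toRelEmbedding := Subrel.inclusionEmbedding (· < ·) (s := Set.Iio a) hlt
      top := ⟨a, ha⟩
      mem_range_iff_rel' := fun b => ⟨by rintro ⟨c, rfl⟩; exact c.2, fun h => ⟨⟨b, h⟩, rfl⟩⟩ }

theorem exists_ordRank_eq {o a : Ordinal} (h : a < o) : ∃ x : o.ToType, ordRank x = a :=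
  ⟨Ordinal.ToType.mk ⟨a, h⟩, Ordinal.typein_enum _ _⟩

namespace FirstOrder.Language

universe u v u' v'

def unaryOnFunc (ι : Type u) : ℕ → Type u
  | 0 => PEmpty
  | 1 => ι
  | _ + 2 => PEmpty

def unaryOn (ι : Type u) : Language.{u, 0} := ⟨unaryOnFunc ι, fun _ => Empty⟩

abbrev unaryOn.structure {ι : Type u} {M : Type*} (F : ι → M → M) :
    (unaryOn ι).Structure M where
  funMap {n} := match n with
    | 1 => fun i x => F i (x 0)
    | 0 | _ + 2 => PEmpty.elim
  RelMap r := Empty.elim r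

instance {ι : Type u} [Countable ι] : Countable (unaryOn ι).Symbols := by
  have : ∀ n, Countable ((unaryOn ι).Functions n)
    | 0 | _ + 2 => inferInstanceAs (Countable PEmpty)
    | 1 => inferInstanceAs (Countable ι)
  exact inferInstanceAs (Countable ((Σ n, (unaryOn ι).Functions n) ⊕ Σ n, Empty))

instance countable_sum_symbols {L : Language.{u, v}} {L' : Language.{u', v'}}
    [Countable L.Symbols] [Countable L'.Symbols] : Countable (L.sum L').Symbols := by
  refine Cardinal.mk_le_aleph0_iff.mp ?_
  change (L.sum L').card ≤ ℵ₀
  rw [card_sum, add_le_aleph0, lift_le_aleph0, lift_le_aleph0, card, card, mk_le_aleph0_iff,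
    mk_le_aleph0_iff]
  exact ⟨‹_›, ‹_›⟩

instance countable_skolem₁_symbols {L : Language.{u, v}} [Countable L.Symbols] :
    Countable L.skolem₁.Symbols := by
  have : Countable (Σ n, L.skolem₁.Functions n) :=
    (Nat.succ_injective.sigma_map (β₂ := L.BoundedFormula Empty)
      (f₂ := fun _ => id) fun _ => Function.injective_id).countable
  exact inferInstanceAs (Countable ((Σ n, L.skolem₁.Functions n) ⊕ Σ n, Empty))

theorem exists_closed_elementarySubstructure_of_equiv {L : Language.{0, 0}} [Countable L.Symbols]
    {M T : Type} [L.Structure M] [Nonempty M] (g : T ≃ M) {P : Set T → Prop}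
    (hP : ∀ (L' : Language.{0, 0}) [L'.Structure T], Countable L'.Symbols →
      ∃ X : L'.Substructure T, P X)
    {A : Set M} (hA : A.Countable) {ι : Type} [Countable ι] (F : ι → M → M) :
    ∃ X : L.ElementarySubstructure M,
      A ⊆ X ∧ (∀ i, ∀ x ∈ X, F i x ∈ X) ∧ P (g ⁻¹' X) := by
  have := hA.to_subtype
  let := unaryOn.structure F
  let L' := (L.sum L.skolem₁)[[A]].sum (unaryOn ι)
  let : L'.Structure T := g.symm.inducedStructure
  obtain ⟨X', hX'⟩ := hP L' inferInstance
  let S : L'.Substructure M := X'.comap (g.symm.inducedStructureEquiv (L := L')).toHom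
  let S₀ := (lhomWithConstants (L.sum L.skolem₁) A).substructureReduct
    ((LHom.sumInl : (L.sum L.skolem₁)[[A]] →ᴸ L').substructureReduct S)
  -- The Skolem functions make every substructure of the expansion elementary in `L`.
  refine ⟨S₀.elementarySkolem₁Reduct,
    fun a ha => S.constants_mem (Sum.inl (Sum.inr ⟨a, ha⟩)),
    fun i x hx => S.fun_mem (Sum.inr i : L'.Functions 1) (fun _ => x) (fun _ => hx), ?_⟩
  convert hX'
  ext x
  exact iff_of_eq (congrArg (· ∈ X') (g.symm_apply_apply x))

end FirstOrder.Language

theorem Function.Injective.apply_mem_iff_of_invFun_mem {α : Type*} [Nonempty α] {f : α → α}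
    (hf : Function.Injective f) {X : Set α} (h₁ : ∀ x ∈ X, f x ∈ X)
    (h₂ : ∀ x ∈ X, Function.invFun f x ∈ X) (x : α) : f x ∈ X ↔ x ∈ X :=
  ⟨fun hx => Function.leftInverse_invFun hf x ▸ h₂ _ hx, h₁ x⟩

theorem deltaJonsson_elementarySubstructure_general
    (δ κ : Cardinal.{0}) (hδκ : δ < κ)
    (hJ : IsDeltaJonsson δ κ)
    (L : FirstOrder.Language.{0, 0}) (hL : Countable L.Symbols)
    (M : Type) [L.Structure M] (hM : #M = κ)
    (e : κ.ord.ToType → M) (he : Function.Injective e)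
    (s : Finset M) :
    ∃ X : L.ElementarySubstructure M,
      ↑s ⊆ (X : Set M) ∧
      setOrderType {α : κ.ord.ToType | e α ∈ X} = δ.ord ∧
      ¬ (∀ α : κ.ord.ToType, ordRank α < δ.ord → α ∈ {α : κ.ord.ToType | e α ∈ X}) := by
  obtain ⟨g⟩ : Nonempty (κ.ord.ToType ≃ M) := Cardinal.eq.mp (by rw [mk_toType, card_ord, hM])
  obtain ⟨β, hβ⟩ := exists_ordRank_eq (ord_lt_ord.mpr hδκ)
  have : Nonempty M := ⟨g β⟩
  have hh : Function.Injective (e ∘ g.symm) := he.comp g.symm.injective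
  obtain ⟨X, hAX, hFX, hX⟩ :=
    Language.exists_closed_elementarySubstructure_of_equiv (L := L) g
      (P := fun Y => setOrderType Y = δ.ord) (fun L' _ hL' => let ⟨X, hX⟩ := hJ L' hL'; ⟨X, hX⟩)
      (s.finite_toSet.insert (g β)).countable ![e ∘ g.symm, Function.invFun (e ∘ g.symm)]
  have hZ : {α | e α ∈ X} = g ⁻¹' X := by
    ext α
    simpa using hh.apply_mem_iff_of_invFun_mem (hFX 0) (hFX 1) (g α)
  refine ⟨X, (Set.subset_insert _ _).trans hAX, hZ ▸ hX, fun hall => ?_⟩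
  have hβZ : β ∈ {α | e α ∈ X} := by simpa [hZ] using hAX (Set.mem_insert _ _)
  have hlt := ordRank_lt_setOrderType hβZ fun b hb => hall b (hβ ▸ (typein_lt_typein _).mpr hb)
  rw [hZ, hX, ← hβ] at hlt
  exact hlt.false

/-- If `δ < κ` are infinite cardinals, `κ` is `δ`-Jónsson, `M` is a structure in a countable
language whose universe has cardinality `κ`, `e` is an injection of (a canonical copy of) `κ`
into `M`, and `s` is a finite subset of `M`, then there is an elementary substructure `X ≼ M`
containing `s` such that `Z = {α < κ : e α ∈ X}` has order type exactly `δ` but `δ ⊄ Z`. -/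
theorem deltaJonsson_elementarySubstructure
    (δ κ : Cardinal.{0}) (hδ : ℵ₀ ≤ δ) (hδκ : δ < κ)
    (hJ : IsDeltaJonsson δ κ)
    (L : FirstOrder.Language.{0, 0}) (hL : Countable L.Symbols)
    (M : Type) [L.Structure M] (hM : #M = κ)
    (e : κ.ord.ToType → M) (he : Function.Injective e)
    (s : Finset M) :
    ∃ X : L.ElementarySubstructure M,
      ↑s ⊆ (X : Set M) ∧
      setOrderType {α : κ.ord.ToType | e α ∈ X} = δ.ord ∧
      ¬ (∀ α : κ.ord.ToType, ordRank α < δ.ord → α ∈ {α : κ.ord.ToType | e α ∈ X}) :=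
  deltaJonsson_elementarySubstructure_general δ κ hδκ hJ L hL M hM e he s
end

section
/- Let κ be an infinite cardinal, let L be a countable first-order language, let M be an L-structure, let f : κ → M be a bijection from κ onto the universe of M, let c : κ → M be an injection into the universe of M, and let s be a finite subset of the universe of M. Then there exist a countable first-order language L′ and an L′-structure B with universe κ such that for every set Z ⊆ κ that is the universe of an elementary substructure of B: the image f″Z is the universe of an elementary substructure of M, s ⊆ f″Z, and for every α < κ one has c(α) ∈ f″Z if and only if α ∈ Z. -/
open FirstOrder Cardinal Ordinal

/-! Transport the structure of `M` to `κ` along `f` and expand it by constants for `f ⁻¹' s` and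
by the unary functions `g = f⁻¹ ∘ c` and a left inverse of `g`. An elementary substructure `Z`
of the expansion is closed under these, so `f ⁻¹' s ⊆ Z` and `g α ∈ Z ↔ α ∈ Z`. Its reduct to
`L` is still elementary, because an elementary substructure meets every nonempty set definable
in the larger language, and `f` carries it onto an elementary substructure of `M` with carrier
`f '' Z`. -/

namespace FirstOrder.Language

variable {L L' : Language} {M N : Type*} [L.Structure M] [L.Structure N]

theorem LHom.isElementary_substructureReduct [L'.Structure M] (φ : L →ᴸ L') [φ.IsExpansionOn M]
    (S : L'.ElementarySubstructure M) : (φ.substructureReduct S.toSubstructure).IsElementary := by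
  have hS : L.MeetsDefinable (S : Set M) := fun D hD hdef =>
    S.meetsDefinable D hD (hdef.map_expansion φ)
  convert hS.isElementary_closure
  exact (SetLike.ext' hS.closure_eq_self).symm

theorem ElementaryEmbedding.isElementary_range (f : M ↪ₑ[L] N) : f.toHom.range.IsElementary := by
  intro n ψ x
  let e : M ≃[L] f.toHom.range := f.toEmbedding.equivRange
  obtain ⟨y, rfl⟩ : ∃ y : Fin n → M, x = e ∘ y := ⟨e.symm ∘ x, by ext i; simp⟩
  have hy : Subtype.val ∘ e ∘ y = f ∘ y := rfl
  rw [hy, f.map_formula]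
  exact (e.toElementaryEmbedding.map_formula ψ y).symm

theorem Equiv.exists_elementarySubstructure_image (g : M ≃[L] N)
    (S : L.ElementarySubstructure M) :
    ∃ T : L.ElementarySubstructure N, (T : Set N) = g '' S :=
  ⟨⟨_, (g.toElementaryEmbedding.comp S.subtype).isElementary_range⟩, by
    change Set.range (g ∘ Subtype.val) = _
    rw [Set.range_comp, Subtype.range_coe]⟩

instance countable_symbols_sum [Countable L.Symbols] [Countable L'.Symbols] :
    Countable (L.sum L').Symbols := by
  rw [← mk_le_aleph0_iff]
  change (L.sum L').card ≤ ℵ₀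
  rw [card_sum]
  exact add_le_aleph0.2 ⟨lift_le_aleph0.2 mk_le_aleph0, lift_le_aleph0.2 mk_le_aleph0⟩

instance countable_symbols_constantsOn {A : Type*} [Countable A] :
    Countable (constantsOn A).Symbols := by
  rw [← mk_le_aleph0_iff]
  change (constantsOn A).card ≤ ℵ₀
  rw [card_constantsOn]
  exact mk_le_aleph0

theorem Substructure.params_subset {A : Set N} (S : (constantsOn A).Substructure N) : A ⊆ S :=
  fun a ha => S.constants_mem (⟨a, ha⟩ : A)

def unaryFunctionsOnFunc (α : Type*) : ℕ → Type _
  | 1 => α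
  | _ => PEmpty

/-- The language whose only symbols are unary function symbols for the elements of `F`, each
interpreted on `N` as itself. -/
def unaryFunctionsOn (F : Set (N → N)) : Language.{_, 0} :=
  ⟨unaryFunctionsOnFunc F, fun _ => Empty⟩

instance unaryFunctionsOnStructure (F : Set (N → N)) : (unaryFunctionsOn F).Structure N where
  funMap {n} φ x := match n, φ with
    | 1, φ => φ.1 (x 0)
  RelMap r := r.elim

instance countable_symbols_unaryFunctionsOn (F : Set (N → N)) [Countable F] :
    Countable (unaryFunctionsOn F).Symbols := by
  have (n : ℕ) : Countable ((unaryFunctionsOn F).Functions n) := by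
    match n with
    | 0 => exact inferInstanceAs (Countable PEmpty)
    | 1 => exact inferInstanceAs (Countable F)
    | _ + 2 => exact inferInstanceAs (Countable PEmpty)
  exact inferInstanceAs (Countable ((Σ n, _) ⊕ (Σ n, Empty)))

theorem Substructure.mapsTo_of_unaryFunctionsOn {F : Set (N → N)}
    (S : (unaryFunctionsOn F).Substructure N) {φ : N → N} (hφ : φ ∈ F) : Set.MapsTo φ S S :=
  fun x hx => S.fun_mem (n := 1) ⟨φ, hφ⟩ (fun _ => x) (fun _ => hx)

end FirstOrder.Language

theorem coding_structure_exists_general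
    (κ : Cardinal.{0})
    (L : FirstOrder.Language.{0, 0}) (hL : Countable L.Symbols)
    (M : Type) [L.Structure M]
    (f : κ.ord.ToType → M) (hf : Function.Bijective f)
    (c : κ.ord.ToType → M) (hc : Function.Injective c)
    (s : Finset M) :
    ∃ (L' : FirstOrder.Language.{0, 0}) (_ : Countable L'.Symbols)
      (B : L'.Structure κ.ord.ToType),
      ∀ Z : Set κ.ord.ToType,
        (∃ Y : @FirstOrder.Language.ElementarySubstructure L' κ.ord.ToType B,
            (Y : Set κ.ord.ToType) = Z) →
        (∃ X : L.ElementarySubstructure M, (X : Set M) = f '' Z) ∧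
        ↑s ⊆ f '' Z ∧
        ∀ α : κ.ord.ToType, c α ∈ f '' Z ↔ α ∈ Z := by
  let e := Equiv.ofBijective f hf
  let g := e.symm ∘ c
  obtain ⟨h, hgh⟩ : ∃ h, Function.LeftInverse h g := by
    cases isEmpty_or_nonempty κ.ord.ToType
    · exact ⟨id, isEmptyElim⟩
    · exact (e.symm.injective.comp hc).hasLeftInverse
  let A : Set κ.ord.ToType := f ⁻¹' s
  have : Countable A := (s.finite_toSet.preimage hf.1.injOn).countable.to_subtype
  let _ : L.Structure κ.ord.ToType := Equiv.inducedStructure e.symm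
  refine ⟨L.sum ((Language.constantsOn A).sum (Language.unaryFunctionsOn {g, h})),
    inferInstance, inferInstance, ?_⟩
  rintro _ ⟨Y, rfl⟩
  let T := Language.LHom.sumInr.substructureReduct Y.toSubstructure
  have hA : A ⊆ Y := (Language.LHom.sumInl.substructureReduct T).params_subset
  have hY {φ} (hφ : φ ∈ ({g, h} : Set _)) : Set.MapsTo φ Y Y :=
    (Language.LHom.sumInr.substructureReduct T).mapsTo_of_unaryFunctionsOn hφ
  refine ⟨(Equiv.inducedStructureEquiv e.symm).symm.exists_elementarySubstructure_image
    ⟨_, Language.LHom.sumInl.isElementary_substructureReduct Y⟩, ?_, fun α => ?_⟩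
  · calc (s : Set M) = f '' A := (Set.image_preimage_eq_of_subset (by simp [hf.2.range_eq])).symm
      _ ⊆ f '' Y := Set.image_mono hA
  · rw [show c α = f (g α) from (e.apply_symm_apply _).symm, hf.1.mem_set_image]
    exact ⟨fun hgα => hgh α ▸ hY (φ := h) (by simp) hgα, fun hα => hY (φ := g) (by simp) hα⟩

/-- Given an infinite cardinal `κ`, a structure `M` in a countable language `L` together with a
bijection `f : κ → M`, an injection `c : κ → M` (a designated copy of `κ` inside `M`), and a
finite subset `s` of `M`, there are a countable language `L'` and an `L'`-structure `B` with
universe `κ` such that for every `Z ⊆ κ` which is the universe of an elementary substructure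
of `B`, the image `f '' Z` is the universe of an elementary substructure of `M`, `s ⊆ f '' Z`,
and for every `α < κ` we have `c α ∈ f '' Z ↔ α ∈ Z`. -/
theorem coding_structure_exists
    (κ : Cardinal.{0}) (hκ : ℵ₀ ≤ κ)
    (L : FirstOrder.Language.{0, 0}) (hL : Countable L.Symbols)
    (M : Type) [L.Structure M]
    (f : κ.ord.ToType → M) (hf : Function.Bijective f)
    (c : κ.ord.ToType → M) (hc : Function.Injective c)
    (s : Finset M) :
    ∃ (L' : FirstOrder.Language.{0, 0}) (_ : Countable L'.Symbols)
      (B : L'.Structure κ.ord.ToType),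
      ∀ Z : Set κ.ord.ToType,
        (∃ Y : @FirstOrder.Language.ElementarySubstructure L' κ.ord.ToType B,
            (Y : Set κ.ord.ToType) = Z) →
        (∃ X : L.ElementarySubstructure M, (X : Set M) = f '' Z) ∧
        ↑s ⊆ f '' Z ∧
        ∀ α : κ.ord.ToType, c α ∈ f '' Z ↔ α ∈ Z :=
  coding_structure_exists_general κ L hL M f hf c hc s
end
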